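/- Let (V, ⟨·,·⟩, A) be a Jacobi–Ricci commuting model which is not Einstein, whose Ricci operator ρ is complex diagonalizable with spectrum of the complexification equal to {2a₁ + 2a₂·i, 2a₁ − 2a₂·i} where a₂ > 0. Then there exist a finite-dimensional positive definite real inner product space (V₀, g) and algebraic curvature tensors A₁, A₂ on V₀, Einstein with Einstein constants a₁ and a₂ respectively, such that (V, ⟨·,·⟩, A) is isomorphic as a model to M(V₀,g,A₁,A₂). -/

import Mathlib

open TensorProduct

/-- `f : W⁴ → ℝ` is multilinear over `ℝ` in each of its four slots. -/
def IsML {W : Type*} [AddCommGroup W] [Module ℝ W] (f : W → W → W → W → ℝ) : Prop :=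
  (∀ x x' y z w, f (x + x') y z w = f x y z w + f x' y z w) ∧
  (∀ (c : ℝ) x y z w, f (c • x) y z w = c * f x y z w) ∧
  (∀ x y y' z w, f x (y + y') z w = f x y z w + f x y' z w) ∧
  (∀ (c : ℝ) x y z w, f x (c • y) z w = c * f x y z w) ∧
  (∀ x y z z' w, f x y (z + z') w = f x y z w + f x y z' w) ∧
  (∀ (c : ℝ) x y z w, f x y (c • z) w = c * f x y z w) ∧
  (∀ x y z w w', f x y z (w + w') = f x y z w + f x y z w') ∧
  (∀ (c : ℝ) x y z w, f x y z (c • w) = c * f x y z w)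

/-- The symmetries of the Riemann curvature tensor. -/
def IsCurvSym {W : Type*} [AddCommGroup W] [Module ℝ W] (f : W → W → W → W → ℝ) : Prop :=
  (∀ x y z w, f x y z w = - f y x z w) ∧
  (∀ x y z w, f x y z w = f z w x y) ∧
  (∀ x y z w, f x y z w + f y z x w + f z x y w = 0)

/-- An algebraic curvature tensor: a multilinear map with the curvature symmetries. -/
def IsACT {W : Type*} [AddCommGroup W] [Module ℝ W] (f : W → W → W → W → ℝ) : Prop :=
  IsML f ∧ IsCurvSym f

/-- The defining value of `⟨ρ x, y⟩`: the trace of `z ↦ ½𝓡(z,x)y + ½𝓡(z,y)x`,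
where `R` is the (curried) curvature operator. -/
noncomputable def ricciForm {V : Type*} [AddCommGroup V] [Module ℝ V]
    (R : V →ₗ[ℝ] V →ₗ[ℝ] V →ₗ[ℝ] V) (x y : V) : ℝ :=
  LinearMap.trace ℝ V
    (((1 : ℝ) / 2) • ((R.flip x).flip y) + ((1 : ℝ) / 2) • ((R.flip y).flip x))

/-- The Jacobi--Ricci commuting identity of Lemma 1 (3). -/
def JRComm {V : Type*} [AddCommGroup V] [Module ℝ V]
    (A : V → V → V → V → ℝ) (ρ : V →ₗ[ℝ] V) : Prop :=
  ∀ v₁ v₂ v₃ v₄ : V,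
    A (ρ v₁) v₂ v₃ v₄ = A v₁ (ρ v₂) v₃ v₄ ∧
    A v₁ (ρ v₂) v₃ v₄ = A v₁ v₂ (ρ v₃) v₄ ∧
    A v₁ v₂ (ρ v₃) v₄ = A v₁ v₂ v₃ (ρ v₄)

/-- The ℂ-valued tensor `A₁ + i·A₂`. -/
noncomputable def acx {W : Type*} [AddCommGroup W] [Module ℝ W]
    (A₁ A₂ : W → W → W → W → ℝ) (x y z w : W) : ℂ :=
  (A₁ x y z w : ℂ) + Complex.I * (A₂ x y z w : ℂ)

/-- The complex multilinear extension `(A₁ + i·A₂)^ℂ` of `A₁ + i·A₂` to the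
complexification of `W`, where `W × W` is identified with `W ⊗ ℂ` via
`(x⁺, x⁻) ↔ x⁺ + i·x⁻`. -/
noncomputable def acExt {W : Type*} [AddCommGroup W] [Module ℝ W]
    (A₁ A₂ : W → W → W → W → ℝ) (p q r s : W × W) : ℂ :=
  acx A₁ A₂ p.1 q.1 r.1 s.1
  + Complex.I * (acx A₁ A₂ p.2 q.1 r.1 s.1 + acx A₁ A₂ p.1 q.2 r.1 s.1
      + acx A₁ A₂ p.1 q.1 r.2 s.1 + acx A₁ A₂ p.1 q.1 r.1 s.2)
  - (acx A₁ A₂ p.2 q.2 r.1 s.1 + acx A₁ A₂ p.2 q.1 r.2 s.1 + acx A₁ A₂ p.2 q.1 r.1 s.2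
      + acx A₁ A₂ p.1 q.2 r.2 s.1 + acx A₁ A₂ p.1 q.2 r.1 s.2 + acx A₁ A₂ p.1 q.1 r.2 s.2)
  - Complex.I * (acx A₁ A₂ p.2 q.2 r.2 s.1 + acx A₁ A₂ p.2 q.2 r.1 s.2
      + acx A₁ A₂ p.2 q.1 r.2 s.2 + acx A₁ A₂ p.1 q.2 r.2 s.2)
  + acx A₁ A₂ p.2 q.2 r.2 s.2

/-- The curvature tensor `A := Re((A₁ + i·A₂)^ℂ)` of the model `M(V₀,g,A₁,A₂)`. -/
noncomputable def modelA {W : Type*} [AddCommGroup W] [Module ℝ W]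
    (A₁ A₂ : W → W → W → W → ℝ) (p q r s : W × W) : ℝ :=
  (acExt A₁ A₂ p q r s).re

/-- The inner product `⟨(x⁺,x⁻),(y⁺,y⁻)⟩ = g(x⁺,y⁺) − g(x⁻,y⁻)` of the model
`M(V₀,g,A₁,A₂)`. -/
def modelB {W : Type*} [AddCommGroup W] [Module ℝ W]
    (g : LinearMap.BilinForm ℝ W) (p q : W × W) : ℝ :=
  g p.1 q.1 - g p.2 q.2

/-- `f` is Einstein with Einstein constant `a` on the positive definite inner product
space `(W, g)`: for every `g`-orthonormal basis `{e_k}` one has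
`Σ_k f(x, e_k, e_k, y) = a·g(x,y)`. -/
def IsEinsteinWith {W : Type*} [AddCommGroup W] [Module ℝ W]
    (g : LinearMap.BilinForm ℝ W) (f : W → W → W → W → ℝ) (a : ℝ) : Prop :=
  ∀ (n : ℕ) (b : Module.Basis (Fin n) ℝ W),
    (∀ i j, g (b i) (b j) = if i = j then 1 else 0) →
    ∀ x y, (∑ k, f x (b k) (b k) y) = a * g x y

/-- `f` is complex diagonalizable: the complexification of `f` acting on `ℂ ⊗ V` is
diagonalizable, i.e. the eigenspaces of the complexified operator span. -/
def IsCDiagonalizable {V : Type*} [AddCommGroup V] [Module ℝ V] (f : V →ₗ[ℝ] V) : Prop :=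
  (⨆ μ : ℂ, Module.End.eigenspace (LinearMap.baseChange ℂ f) μ) = ⊤

/-!
Put `J = (2a₂)⁻¹ (ρ - 2a₁)`. Since `ρ` is complex diagonalizable with eigenvalues `2a₁ ± 2a₂ i`,
`(ρ - 2a₁)² = -(2a₂)²`, so `J² = -1`; `J` is `B`-self-adjoint and, being an affine function of `ρ`,
moves freely between the slots of `A`. Letting `i` act by `J` makes `V` a complex vector space on
which `B x y - i B (J x) y` is a nondegenerate symmetric `ℂ`-bilinear form. The real span `V₀` of
a complex orthonormal basis for it is positive definite for `B` and `B`-orthogonal to `J V₀`, and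
`(x, y) ↦ x + J y` identifies the model with `M(V₀, B, A, A(-J·,·,·,·))`. Computing the Ricci
trace in the basis `{b_k} ∪ {J b_k}` of signature `(n, n)` gives `ρ = 2 ∑ₖ A(·, b_k, b_k, ·)` on
`V₀`, and `ρ = 2a₁ + 2a₂ J` yields the Einstein constants `a₁` and `a₂`.
-/

section CurvatureTensor

variable {U W : Type*} [AddCommGroup U] [Module ℝ U] [AddCommGroup W] [Module ℝ W]
  {f : W → W → W → W → ℝ}

lemma IsCurvSym.antisymm_right (hf : IsCurvSym f) (x y z w : W) : f x y z w = -f x y w z := by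
  rw [hf.2.1, hf.1, hf.2.1 w]

lemma IsCurvSym.swap_outer (hf : IsCurvSym f) (x y z : W) : f x y y z = f z y y x := by
  rw [hf.2.1, hf.1, hf.antisymm_right, neg_neg]

lemma IsML.neg_left (hf : IsML f) (x y z w : W) : f (-x) y z w = -f x y z w := by
  rw [← neg_one_smul ℝ x, hf.2.1]; ring

lemma IsACT.comp_linearMap (hf : IsACT f) (L : U →ₗ[ℝ] W) :
    IsACT (fun x y z w => f (L x) (L y) (L z) (L w)) := by
  obtain ⟨⟨h1, h2, h3, h4, h5, h6, h7, h8⟩, s1, s2, s3⟩ := hf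
  refine ⟨⟨?_, ?_, ?_, ?_, ?_, ?_, ?_, ?_⟩, ?_, ?_, ?_⟩ <;> intros <;>
    simp only [map_add, map_smul, h1, h2, h3, h4, h5, h6, h7, h8]
  exacts [s1 .., s2 .., s3 ..]

end CurvatureTensor

section JacobiRicci

variable {W : Type*} [AddCommGroup W] [Module ℝ W] {f : W → W → W → W → ℝ} {T : W →ₗ[ℝ] W}

lemma JRComm.smul_sub_smul_one (hf : IsML f) (hT : JRComm f T) (s t : ℝ) :
    JRComm f (s • (T - t • 1)) := by
  obtain ⟨h1, h2, h3, h4, h5, h6, h7, h8⟩ := hf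
  intro v₁ v₂ v₃ v₄
  obtain ⟨e₁, e₂, e₃⟩ := hT v₁ v₂ v₃ v₄
  simp only [LinearMap.smul_apply, LinearMap.sub_apply, Module.End.one_apply]
  simp only [sub_eq_add_neg, ← neg_smul, h1, h2, h3, h4, h5, h6, h7, h8, e₁, e₂, e₃, and_self]

lemma JRComm.apply_second (hT : JRComm f T) (x y z w : W) : f x (T y) z w = f (T x) y z w :=
  (hT x y z w).1.symm

lemma JRComm.apply_third (hT : JRComm f T) (x y z w : W) : f x y (T z) w = f (T x) y z w :=
  ((hT x y z w).1.trans (hT x y z w).2.1).symm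

lemma JRComm.apply_fourth (hT : JRComm f T) (x y z w : W) : f x y z (T w) = f (T x) y z w :=
  (((hT x y z w).1.trans (hT x y z w).2.1).trans (hT x y z w).2.2).symm

lemma IsACT.comp_left_of_JRComm (hf : IsACT f) (hT : JRComm f T) :
    IsACT (fun x y z w => f (T x) y z w) := by
  obtain ⟨⟨h1, h2, h3, h4, h5, h6, h7, h8⟩, s1, s2, s3⟩ := hf
  refine ⟨⟨?_, ?_, ?_, ?_, ?_, ?_, ?_, ?_⟩, fun x y z w => ?_, fun x y z w => ?_,
    fun x y z w => ?_⟩ <;> intros <;> simp only [map_add, map_smul, h1, h2, h3, h4, h5, h6, h7, h8]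
  · rw [s1, hT.apply_second]
  · rw [← hT.apply_third, s2]
  · rw [← hT.apply_fourth, ← hT.apply_fourth, ← hT.apply_fourth]
    exact s3 x y z (T w)

lemma modelA_eq_of_JRComm (hf : IsML f) {J : W →ₗ[ℝ] W} (hJ : JRComm f J)
    (hJJ : ∀ x, J (J x) = -x) (p q r s : W × W) :
    f (p.1 + J p.2) (q.1 + J q.2) (r.1 + J r.2) (s.1 + J s.2) =
      modelA f (fun x y z w => f ((-J) x) y z w) p q r s := by
  have hJJ₁ : ∀ x y z w, f (J (J x)) y z w = -f x y z w := fun x y z w => by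
    rw [hJJ, hf.neg_left]
  simp only [hf.1, hf.2.2.1, hf.2.2.2.2.1, hf.2.2.2.2.2.2.1]
  simp only [modelA, acExt, acx, Complex.add_re, Complex.sub_re, Complex.mul_re,
    Complex.add_im, Complex.mul_im, Complex.I_re, Complex.I_im,
    Complex.ofReal_re, Complex.ofReal_im]
  simp only [LinearMap.neg_apply, hf.neg_left, hJ.apply_second, hJ.apply_third, hJ.apply_fourth,
    hJJ₁]
  ring

end JacobiRicci

open Polynomial in
lemma IsCDiagonalizable.aeval_eq_zero {V : Type*} [AddCommGroup V] [Module ℝ V]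
    [FiniteDimensional ℝ V] {f : V →ₗ[ℝ] V} (hf : IsCDiagonalizable f) (P : ℝ[X])
    (hP : ∀ μ ∈ spectrum ℂ (f.baseChange ℂ), aeval μ P = 0) : aeval f P = 0 := by
  have hbc : (aeval f P).baseChange ℂ = aeval (f.baseChange ℂ) (P.map (algebraMap ℝ ℂ)) := by
    rw [aeval_map_algebraMap]
    exact (aeval_algHom_apply (Module.End.baseChangeHom ℝ ℂ V) f P).symm
  have hker : ∀ μ : ℂ, Module.End.eigenspace (f.baseChange ℂ) μ ≤ LinearMap.ker
      (aeval (f.baseChange ℂ) (P.map (algebraMap ℝ ℂ))) := by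
    intro μ v hv
    rw [LinearMap.mem_ker, Module.End.aeval_apply_of_mem_apply_eq_smul
      (Module.End.mem_eigenspace_iff.mp hv)]
    rcases eq_or_ne v 0 with rfl | hv0
    · exact smul_zero _
    have hμ : μ ∈ spectrum ℂ (f.baseChange ℂ) := Module.End.hasEigenvalue_iff_mem_spectrum.mp
      (Module.End.hasEigenvalue_of_hasEigenvector ⟨hv, hv0⟩)
    rw [eval_map_algebraMap, hP μ hμ, zero_smul]
  have hzero : (aeval f P).baseChange ℂ = 0 := by
    rw [hbc, ← LinearMap.ker_eq_top, eq_top_iff, ← hf]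
    exact iSup_le hker
  exact LinearMap.baseChangeHom_injective (R := ℝ) (S := ℂ) (M := V) (N := V)
    (hzero.trans (LinearMap.baseChange_zero).symm)

open Polynomial in
lemma IsCDiagonalizable.mul_self_eq_neg_one {V : Type*} [AddCommGroup V] [Module ℝ V]
    [FiniteDimensional ℝ V] {f : V →ₗ[ℝ] V} (hf : IsCDiagonalizable f) {a₁ a₂ : ℝ} (ha₂ : a₂ ≠ 0)
    (hspec : spectrum ℂ (LinearMap.baseChange ℂ f) ⊆
      {((2 * a₁ : ℝ) : ℂ) + ((2 * a₂ : ℝ) : ℂ) * Complex.I,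
       ((2 * a₁ : ℝ) : ℂ) - ((2 * a₂ : ℝ) : ℂ) * Complex.I}) :
    ((2 * a₂)⁻¹ • (f - (2 * a₁) • 1)) * ((2 * a₂)⁻¹ • (f - (2 * a₁) • 1)) = -1 := by
  have h := hf.aeval_eq_zero ((X - C (2 * a₁)) ^ 2 + C ((2 * a₂) ^ 2)) fun μ hμ => by
    rcases hspec hμ with rfl | rfl <;>
      simp only [map_add, map_pow, map_sub, aeval_X, aeval_C, Complex.coe_algebraMap] <;>
      push_cast <;> ring_nf <;> simp [Complex.I_sq]
  simp only [map_add, map_pow, map_sub, aeval_X, aeval_C, Algebra.algebraMap_eq_smul_one,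
    _root_.smul_pow, one_pow] at h
  rw [smul_mul_smul_comm, ← pow_two (f - _), eq_neg_of_add_eq_zero_left h, smul_neg, smul_smul,
    show (2 * a₂)⁻¹ * (2 * a₂)⁻¹ * (2 * a₂) ^ 2 = 1 by field_simp, one_smul]

lemma LinearMap.trace_eq_sum_of_gram {V ι : Type*} [AddCommGroup V] [Module ℝ V] [Fintype ι]
    [DecidableEq ι] (B : LinearMap.BilinForm ℝ V) (b : Module.Basis ι ℝ V) (ε : ι → ℝ)
    (hε : ∀ i, ε i * ε i = 1) (hb : ∀ i j, B (b i) (b j) = if i = j then ε i else 0)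
    (f : V →ₗ[ℝ] V) : LinearMap.trace ℝ V f = ∑ i, ε i * B (f (b i)) (b i) := by
  have hrepr : ∀ v i, b.repr v i = ε i * B v (b i) := fun v i => by
    conv_rhs => rw [← b.sum_repr v]
    simp only [map_sum, map_smul, LinearMap.sum_apply, LinearMap.smul_apply, smul_eq_mul, hb,
      mul_ite, mul_zero, Finset.sum_ite_eq', Finset.mem_univ, if_true]
    rw [mul_left_comm, hε, mul_one]
  rw [LinearMap.trace_eq_matrix_trace ℝ b, Matrix.trace]
  exact Finset.sum_congr rfl fun i _ => by rw [Matrix.diag, LinearMap.toMatrix_apply, hrepr]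

lemma ricciForm_eq_sum_of_gram {V ι : Type*} [AddCommGroup V] [Module ℝ V] [Fintype ι]
    [DecidableEq ι] {B : LinearMap.BilinForm ℝ V} {A : V → V → V → V → ℝ} (hA : IsCurvSym A)
    {R : V →ₗ[ℝ] V →ₗ[ℝ] V →ₗ[ℝ] V} (hR : ∀ x y z w, B (R x y z) w = A x y z w)
    (b : Module.Basis ι ℝ V) (ε : ι → ℝ) (hε : ∀ i, ε i * ε i = 1)
    (hb : ∀ i j, B (b i) (b j) = if i = j then ε i else 0) (u w : V) :
    ricciForm R u w = ∑ i, ε i * A u (b i) (b i) w := by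
  rw [ricciForm, LinearMap.trace_eq_sum_of_gram B b ε hε hb]
  refine Finset.sum_congr rfl fun i _ => ?_
  simp only [LinearMap.add_apply, LinearMap.smul_apply, LinearMap.flip_apply, map_add, map_smul,
    smul_eq_mul, hR]
  rw [hA.2.1 (b i) u, hA.2.1 (b i) w, hA.swap_outer w]
  ring

lemma LinearMap.BilinForm.exists_orthonormal_basis_of_isAlgClosed {K E : Type*} [Field K]
    [IsAlgClosed K] [Invertible (2 : K)] [AddCommGroup E] [Module K E] [FiniteDimensional K E]
    {φ : LinearMap.BilinForm K E} (hφ : LinearMap.IsSymm φ) (hφ' : φ.SeparatingLeft) :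
    ∃ e : Module.Basis (Fin (Module.finrank K E)) K E,
      ∀ j k, φ (e j) (e k) = if j = k then 1 else 0 := by
  obtain ⟨v, hv⟩ := LinearMap.BilinForm.exists_orthogonal_basis hφ
  have hvv : ∀ k, φ (v k) (v k) ≠ 0 := by
    intro k hk
    refine v.ne_zero k (hφ' _ fun y => ?_)
    rw [← v.sum_repr y, map_sum]
    refine Finset.sum_eq_zero fun j _ => ?_
    rcases eq_or_ne k j with rfl | hkj
    · rw [map_smul, hk, smul_zero]
    · rw [map_smul, hv hkj, smul_zero]
  have hsqrt : ∀ k, ∃ c : K, c ^ 2 = (φ (v k) (v k))⁻¹ := fun k =>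
    IsAlgClosed.exists_pow_nat_eq _ two_pos
  choose c hc using hsqrt
  have hc0 : ∀ k, c k ≠ 0 := fun k h0 => hvv k (by simpa [h0] using (hc k).symm)
  refine ⟨v.isUnitSMul fun k => (hc0 k).isUnit, fun j k => ?_⟩
  simp only [Module.Basis.isUnitSMul_apply, map_smul, LinearMap.smul_apply, smul_eq_mul]
  rcases eq_or_ne j k with rfl | hjk
  · rw [if_pos rfl, ← mul_assoc, ← sq, hc, inv_mul_cancel₀ (hvv j)]
  · rw [if_neg hjk, hv hjk, mul_zero, mul_zero]

section RealForm

open Complex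

variable {V : Type*} [AddCommGroup V] [Module ℝ V]

structure IsAdaptedRealForm (B : LinearMap.BilinForm ℝ V) (J : Module.End ℝ V)
    (V₀ : Submodule ℝ V) : Prop where
  pos : ∀ x ∈ V₀, x ≠ 0 → 0 < B x x
  orth : ∀ x ∈ V₀, ∀ y ∈ V₀, B (J x) y = 0
  span : ∀ v, ∃ x ∈ V₀, ∃ y ∈ V₀, v = x + J y

section ComplexModule

variable [Module ℂ V] [IsScalarTower ℝ ℂ V]

lemma smul_eq_re_smul_add_im_smul_I (c : ℂ) (x : V) : c • x = c.re • x + c.im • (I • x) := by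
  conv_lhs => rw [← re_add_im c]
  rw [add_smul, mul_smul, ← coe_algebraMap, algebraMap_smul, algebraMap_smul]

variable (B : LinearMap.BilinForm ℝ V)

noncomputable def complexForm (hIB : ∀ x y, B (I • x) y = B x (I • y)) :
    LinearMap.BilinForm ℂ V :=
  LinearMap.mk₂ ℂ (fun x y => (B x y : ℂ) - I * B (I • x) y)
    (fun x x' y => by simp only [smul_add, map_add, LinearMap.add_apply, ofReal_add]; ring)
    (fun c x y => by
      rw [smul_smul, smul_eq_re_smul_add_im_smul_I c x, smul_eq_re_smul_add_im_smul_I (I * c) x]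
      apply Complex.ext <;> simp)
    (fun x y y' => by simp only [map_add, ofReal_add]; ring)
    (fun c x y => by
      rw [smul_eq_re_smul_add_im_smul_I c y]
      simp only [map_add, map_smul, smul_eq_mul, ← hIB, smul_smul, I_mul_I, neg_smul, one_smul,
        map_neg, LinearMap.neg_apply]
      apply Complex.ext <;> simp [add_comm])

lemma complexForm_apply (hIB : ∀ x y, B (I • x) y = B x (I • y)) (x y : V) :
    complexForm B hIB x y = (B x y : ℂ) - I * B (I • x) y :=
  rfl

lemma isAdaptedRealForm_span_range {ι : Type*} [Fintype ι] [DecidableEq ι]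
    (e : Module.Basis ι ℂ V) {J : Module.End ℝ V} (hJ : ∀ x, I • x = J x)
    (he : ∀ j k, B (e j) (e k) = if j = k then 1 else 0) (hJe : ∀ j k, B (J (e j)) (e k) = 0) :
    IsAdaptedRealForm B J (Submodule.span ℝ (Set.range e)) := by
  refine ⟨fun x hx hx0 => ?_, fun x hx y hy => ?_, fun v => ?_⟩
  · obtain ⟨c, rfl⟩ := (Submodule.mem_span_range_iff_exists_fun ℝ).mp hx
    have hc : ∃ k, c k ≠ 0 := by
      by_contra! hc
      simp [hc] at hx0
    obtain ⟨k, hk⟩ := hc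
    simp only [map_sum, map_smul, LinearMap.sum_apply, LinearMap.smul_apply, smul_eq_mul, he,
      mul_ite, mul_one, mul_zero, Finset.sum_ite_eq', Finset.mem_univ, if_true]
    exact Finset.sum_pos' (fun i _ => mul_self_nonneg _)
      ⟨k, Finset.mem_univ k, mul_self_pos.mpr hk⟩
  · obtain ⟨c, rfl⟩ := (Submodule.mem_span_range_iff_exists_fun ℝ).mp hx
    obtain ⟨d, rfl⟩ := (Submodule.mem_span_range_iff_exists_fun ℝ).mp hy
    simp [map_sum, hJe]
  · refine ⟨∑ k, (e.repr v k).re • e k, ?_, ∑ k, (e.repr v k).im • e k, ?_, ?_⟩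
    · exact Submodule.sum_mem _ fun k _ => Submodule.smul_mem _ _ (Submodule.subset_span ⟨k, rfl⟩)
    · exact Submodule.sum_mem _ fun k _ => Submodule.smul_mem _ _ (Submodule.subset_span ⟨k, rfl⟩)
    · conv_lhs => rw [← e.sum_repr v]
      simp only [smul_eq_re_smul_add_im_smul_I (e.repr v _), hJ, map_sum, map_smul,
        Finset.sum_add_distrib]

lemma exists_isAdaptedRealForm_of_smul_I [FiniteDimensional ℂ V] {J : Module.End ℝ V}
    (hJ : ∀ x, I • x = J x) (hBsymm : ∀ x y, B x y = B y x)
    (hBnondeg : ∀ x, (∀ y, B x y = 0) → x = 0) (hJB : ∀ x y, B (J x) y = B x (J y)) :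
    ∃ V₀, IsAdaptedRealForm B J V₀ := by
  have hIB : ∀ x y, B (I • x) y = B x (I • y) := by simpa only [hJ] using hJB
  have hsymm : LinearMap.IsSymm (complexForm B hIB) := LinearMap.isSymm_def.mpr fun x y => by
    rw [RingHom.id_apply, complexForm_apply, complexForm_apply, hBsymm x y, hIB, hBsymm x]
  have hsep : (complexForm B hIB).SeparatingLeft := fun x hx => hBnondeg x fun y => by
    simpa [complexForm_apply] using congrArg re (hx y)
  let : Invertible (2 : ℂ) := invertibleOfNonzero two_ne_zero
  obtain ⟨e, he⟩ := LinearMap.BilinForm.exists_orthonormal_basis_of_isAlgClosed hsymm hsep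
  refine ⟨_, isAdaptedRealForm_span_range B e hJ (fun j k => ?_) (fun j k => ?_)⟩
  · simpa [complexForm_apply, apply_ite re] using congrArg re (he j k)
  · simpa [complexForm_apply, hJ, apply_ite im] using congrArg im (he j k)

end ComplexModule

theorem exists_isAdaptedRealForm [FiniteDimensional ℝ V]
    (B : LinearMap.BilinForm ℝ V) (hBsymm : ∀ x y, B x y = B y x)
    (hBnondeg : ∀ x, (∀ y, B x y = 0) → x = 0) {J : Module.End ℝ V} (hJ : J * J = -1)
    (hJB : ∀ x y, B (J x) y = B x (J y)) : ∃ V₀, IsAdaptedRealForm B J V₀ := by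
  let φ := Complex.lift ⟨J, hJ⟩
  let : Module ℂ V := Module.compHom V φ.toRingHom
  have : IsScalarTower ℝ ℂ V := ⟨fun r c x => show φ (r • c) x = r • φ c x by rw [map_smul]; rfl⟩
  have : FiniteDimensional ℂ V := .right ℝ ℂ V
  exact exists_isAdaptedRealForm_of_smul_I B (fun x => show φ Complex.I x = J x by simp [φ])
    hBsymm hBnondeg hJB

end RealForm

namespace IsAdaptedRealForm

variable {V : Type*} [AddCommGroup V] [Module ℝ V] {B : LinearMap.BilinForm ℝ V}
  {J : Module.End ℝ V} {V₀ : Submodule ℝ V} (hV₀ : IsAdaptedRealForm B J V₀)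
  (hJJ : ∀ x, J (J x) = -x) (hJB : ∀ x y, B (J x) y = B x (J y))
include hV₀ hJJ hJB

lemma coprod_injective : Function.Injective (V₀.subtype.coprod (J ∘ₗ V₀.subtype)) := by
  refine (injective_iff_map_eq_zero _).mpr fun ⟨x, y⟩ hxy => ?_
  simp only [LinearMap.coprod_apply, Submodule.subtype_apply, LinearMap.comp_apply] at hxy
  have hx : x = 0 := by
    by_contra hx
    have hxx := hV₀.pos x x.2 (by simpa using hx)
    have h0 := congrArg (B x) hxy
    rw [map_add, ← hJB, hV₀.orth _ x.2 _ y.2, add_zero, map_zero] at h0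
    exact hxx.ne' h0
  subst hx
  have hy : J (y : V) = 0 := by simpa using hxy
  have hy' : (y : V) = 0 := by simpa [hJJ] using congrArg J hy
  simpa using hy'

noncomputable def equiv : (V₀ × V₀) ≃ₗ[ℝ] V :=
  LinearEquiv.ofBijective (V₀.subtype.coprod (J ∘ₗ V₀.subtype))
    ⟨hV₀.coprod_injective hJJ hJB, fun v => by
      obtain ⟨x, hx, y, hy, rfl⟩ := hV₀.span v
      exact ⟨(⟨x, hx⟩, ⟨y, hy⟩), rfl⟩⟩

lemma equiv_apply (p : V₀ × V₀) : hV₀.equiv hJJ hJB p = p.1 + J p.2 :=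
  rfl

lemma apply_equiv_equiv (p q : V₀ × V₀) :
    B (hV₀.equiv hJJ hJB p) (hV₀.equiv hJJ hJB q) = modelB (B.restrict V₀) p q := by
  show _ = B p.1 q.1 - B p.2 q.2
  simp only [equiv_apply, map_add, LinearMap.add_apply]
  rw [hV₀.orth _ p.2.2 _ q.1.2, ← hJB, hV₀.orth _ p.1.2 _ q.2.2, hJB, hJJ, map_neg]
  ring

lemma ricciForm_eq_two_mul_sum {A : V → V → V → V → ℝ} (hA : IsACT A) (hAJ : JRComm A J)
    {R : V →ₗ[ℝ] V →ₗ[ℝ] V →ₗ[ℝ] V} (hR : ∀ x y z w, B (R x y z) w = A x y z w)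
    {ι : Type*} [Fintype ι] [DecidableEq ι] (b : Module.Basis ι ℝ V₀)
    (hb : ∀ i j, B.restrict V₀ (b i) (b j) = if i = j then 1 else 0) (u w : V) :
    ricciForm R u w = 2 * ∑ k, A u (b k) (b k) w := by
  let C := (b.prod b).map (hV₀.equiv hJJ hJB)
  have hb' : ∀ i j, B (b i) (b j) = if i = j then 1 else 0 := hb
  have hC : ∀ i j, B (C i) (C j) = if i = j then Sum.elim (fun _ => 1) (fun _ => -1) i else 0 := by
    rintro (j | j) (k | k) <;> simp [C, apply_equiv_equiv, modelB, hb', neg_ite]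
  rw [ricciForm_eq_sum_of_gram hA.2 hR C _ (by rintro (k | k) <;> norm_num) hC,
    Fintype.sum_sum_type]
  have hJJA : ∀ k, A u (J (b k)) (J (b k)) w = -A u (b k) (b k) w := fun k => by
    rw [hAJ.apply_second, hAJ.apply_third, hJJ, hA.1.neg_left]
  simp [C, equiv_apply, hJJA, two_mul]

lemma isEinsteinWith {A : V → V → V → V → ℝ} (hA : IsACT A) (hAJ : JRComm A J)
    {R : V →ₗ[ℝ] V →ₗ[ℝ] V →ₗ[ℝ] V} (hR : ∀ x y z w, B (R x y z) w = A x y z w)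
    (L : Module.End ℝ V) (c : ℝ) (hL : ∀ x ∈ V₀, ∀ y ∈ V₀, ricciForm R (L x) y = 2 * c * B x y) :
    IsEinsteinWith (B.restrict V₀) (fun x y z w => A (L x) y z w) c := fun _ b hb x y => by
  have h := hV₀.ricciForm_eq_two_mul_sum hJJ hJB hA hAJ hR b hb (L x) y
  change ∑ k, A (L x) (b k) (b k) y = c * B x y
  linarith [hL x x.2 y y.2]

end IsAdaptedRealForm

theorem statement8_general
    {V : Type*} [AddCommGroup V] [Module ℝ V] [FiniteDimensional ℝ V]
    (B : LinearMap.BilinForm ℝ V)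
    (hBsymm : ∀ x y, B x y = B y x)
    (hBnondeg : ∀ x, (∀ y, B x y = 0) → x = 0)
    (A : V → V → V → V → ℝ) (hA : IsACT A)
    (R : V →ₗ[ℝ] V →ₗ[ℝ] V →ₗ[ℝ] V)
    (hR : ∀ x y z w, B (R x y z) w = A x y z w)
    (ρ : V →ₗ[ℝ] V)
    (hρ : ∀ x y, B (ρ x) y = ricciForm R x y)
    (hJR : JRComm A ρ)
    (hdiag : IsCDiagonalizable ρ)
    (a₁ a₂ : ℝ) (ha₂ : 0 < a₂)
    (hspec : spectrum ℂ (LinearMap.baseChange ℂ ρ) =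
      {((2 * a₁ : ℝ) : ℂ) + ((2 * a₂ : ℝ) : ℂ) * Complex.I,
       ((2 * a₁ : ℝ) : ℂ) - ((2 * a₂ : ℝ) : ℂ) * Complex.I}) :
    ∃ (V₀ : Submodule ℝ V) (g : LinearMap.BilinForm ℝ V₀)
      (A₁ A₂ : V₀ → V₀ → V₀ → V₀ → ℝ),
      (∀ x y, g x y = g y x) ∧
      (∀ x : V₀, x ≠ 0 → 0 < g x x) ∧
      IsACT A₁ ∧ IsACT A₂ ∧
      IsEinsteinWith g A₁ a₁ ∧ IsEinsteinWith g A₂ a₂ ∧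
      ∃ Θ : (V₀ × V₀) ≃ₗ[ℝ] V,
        (∀ p q : V₀ × V₀, B (Θ p) (Θ q) = modelB g p q) ∧
        (∀ p q r s : V₀ × V₀, A (Θ p) (Θ q) (Θ r) (Θ s) = modelA A₁ A₂ p q r s) := by
  have hρB : ∀ x y, B (ρ x) y = B x (ρ y) := fun x y => by
    rw [hρ, hBsymm, hρ, ricciForm, ricciForm, add_comm]
  set J : Module.End ℝ V := (2 * a₂)⁻¹ • (ρ - (2 * a₁) • 1) with hJ
  have hJ2 : J * J = -1 := hdiag.mul_self_eq_neg_one ha₂.ne' hspec.subset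
  have hJJ : ∀ x, J (J x) = -x := LinearMap.congr_fun hJ2
  have hJB : ∀ x y, B (J x) y = B x (J y) := fun x y => by simp [J, hρB]
  have hρJ : ∀ x, ρ x = (2 * a₁) • x + (2 * a₂) • J x := fun x => by
    rw [hJ, LinearMap.smul_apply, smul_smul, mul_inv_cancel₀ (by positivity), one_smul,
      LinearMap.sub_apply, LinearMap.smul_apply, Module.End.one_apply, add_sub_cancel]
  have hAJ : JRComm A J := hJR.smul_sub_smul_one hA.1 _ _
  have hAJ' : JRComm A (-J) := by rw [hJ, ← neg_smul]; exact hJR.smul_sub_smul_one hA.1 _ _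
  obtain ⟨V₀, hV₀⟩ := exists_isAdaptedRealForm B hBsymm hBnondeg hJ2 hJB
  have hric₁ : ∀ x ∈ V₀, ∀ y ∈ V₀, ricciForm R ((1 : Module.End ℝ V) x) y = 2 * a₁ * B x y :=
    fun x hx y hy => by simp [← hρ, hρJ, hV₀.orth x hx y hy]
  have hric₂ : ∀ x ∈ V₀, ∀ y ∈ V₀, ricciForm R ((-J) x) y = 2 * a₂ * B x y :=
    fun x hx y hy => by simp [← hρ, hρJ, hJJ, hV₀.orth x hx y hy]
  exact ⟨V₀, B.restrict V₀, fun x y z w => A x y z w, fun x y z w => A ((-J) x) y z w,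
    fun x y => hBsymm x y, fun x hx => hV₀.pos x x.2 (by simpa using hx),
    hA.comp_linearMap V₀.subtype, (hA.comp_left_of_JRComm hAJ').comp_linearMap V₀.subtype,
    hV₀.isEinsteinWith hJJ hJB hA hAJ hR 1 a₁ hric₁,
    hV₀.isEinsteinWith hJJ hJB hA hAJ hR (-J) a₂ hric₂,
    hV₀.equiv hJJ hJB, hV₀.apply_equiv_equiv hJJ hJB, fun p q r s =>
      modelA_eq_of_JRComm hA.1 hAJ hJJ (Prod.map V₀.subtype V₀.subtype p)
        (Prod.map V₀.subtype V₀.subtype q) (Prod.map V₀.subtype V₀.subtype r)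
        (Prod.map V₀.subtype V₀.subtype s)⟩

theorem statement8
    {V : Type*} [AddCommGroup V] [Module ℝ V] [FiniteDimensional ℝ V]
    (B : LinearMap.BilinForm ℝ V)
    (hBsymm : ∀ x y, B x y = B y x)
    (hBnondeg : ∀ x, (∀ y, B x y = 0) → x = 0)
    (A : V → V → V → V → ℝ) (hA : IsACT A)
    (R : V →ₗ[ℝ] V →ₗ[ℝ] V →ₗ[ℝ] V)
    (hR : ∀ x y z w, B (R x y z) w = A x y z w)
    (ρ : V →ₗ[ℝ] V)
    (hρ : ∀ x y, B (ρ x) y = ricciForm R x y)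
    (hJR : JRComm A ρ)
    (hnotEinstein : ¬ ∃ a : ℝ, ρ = a • LinearMap.id)
    (hdiag : IsCDiagonalizable ρ)
    (a₁ a₂ : ℝ) (ha₂ : 0 < a₂)
    (hspec : spectrum ℂ (LinearMap.baseChange ℂ ρ) =
      {((2 * a₁ : ℝ) : ℂ) + ((2 * a₂ : ℝ) : ℂ) * Complex.I,
       ((2 * a₁ : ℝ) : ℂ) - ((2 * a₂ : ℝ) : ℂ) * Complex.I}) :
    ∃ (V₀ : Submodule ℝ V) (g : LinearMap.BilinForm ℝ V₀)
      (A₁ A₂ : V₀ → V₀ → V₀ → V₀ → ℝ),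
      (∀ x y, g x y = g y x) ∧
      (∀ x : V₀, x ≠ 0 → 0 < g x x) ∧
      IsACT A₁ ∧ IsACT A₂ ∧
      IsEinsteinWith g A₁ a₁ ∧ IsEinsteinWith g A₂ a₂ ∧
      ∃ Θ : (V₀ × V₀) ≃ₗ[ℝ] V,
        (∀ p q : V₀ × V₀, B (Θ p) (Θ q) = modelB g p q) ∧
        (∀ p q r s : V₀ × V₀, A (Θ p) (Θ q) (Θ r) (Θ s) = modelA A₁ A₂ p q r s) :=
  statement8_general B hBsymm hBnondeg A hA R hR ρ hρ hJR hdiag a₁ a₂ ha₂ hspec
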